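/- Let a, b, c be real with c − a − b < 0, a, b > 0, c > 0. Then as x → 1⁻, ₂F₁(a, b; c; x) · (1−x)^{a+b−c} → Γ(c)Γ(a+b−c)/(Γ(a)Γ(b)). -/

import Mathlib

/-!
Put `s = a + b - c > 0`. The coefficients of `₂F₁(a, b; c; x)` are `(a)ₙ (b)ₙ / ((c)ₙ n!)`,
those of the binomial series `(1 - x)^(-s) = ∑ (s)ₙ / n! xⁿ` are `(s)ₙ / n!`, and since
`c + s = a + b`, Gauss's product formula for `Γ` shows that their quotient
`(a)ₙ (b)ₙ / ((c)ₙ (s)ₙ)` tends to `Γ(c) Γ(s) / (Γ(a) Γ(b))`. As `x → 1⁻` the binomial series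
diverges, so finitely many coefficients do not matter, and the limit of the coefficient quotient
passes to the quotient `₂F₁(a, b; c; x) / (1 - x)^(-s)` of the sums.
-/

open Real Filter

/-- Ascending factorial (Pochhammer symbol). -/
noncomputable def asc (u : ℝ) (j : ℕ) : ℝ := ∏ i ∈ Finset.range j, (u + i)

/-- Gaussian hypergeometric function (power series). -/
noncomputable def hyp2F1 (a b c x : ℝ) : ℝ :=
  ∑' j : ℕ, asc a j * asc b j / (asc c j * (Nat.factorial j : ℝ)) * x ^ j

open Topology Asymptotics Finset

lemma asc_succ (u : ℝ) (n : ℕ) : asc u (n + 1) = asc u n * (u + n) :=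
  prod_range_succ _ _

lemma asc_pos {u : ℝ} (hu : 0 < u) (n : ℕ) : 0 < asc u n :=
  prod_pos fun _ _ => by positivity

lemma asc_eq_eval_ascPochhammer (u : ℝ) (n : ℕ) : asc u n = (ascPochhammer ℝ n).eval u := by
  induction n with
  | zero => simp [asc]
  | succ n ih => rw [asc_succ, ascPochhammer_succ_eval, ih]

lemma choose_add_sub_one_eq_asc_div_factorial (s : ℝ) (n : ℕ) :
    Ring.choose (s + n - 1) n = asc s n / n.factorial := by
  rw [Ring.choose_eq_smul, Polynomial.descPochhammer_smeval_eq_ascPochhammer,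
    Polynomial.ascPochhammer_smeval_eq_eval,
    asc_eq_eval_ascPochhammer, smul_eq_mul, inv_mul_eq_div]
  ring_nf

lemma hasSum_asc_div_factorial_mul_pow (s : ℝ) {x : ℝ} (hx : |x| < 1) :
    HasSum (fun n => asc s n / n.factorial * x ^ n) ((1 - x) ^ (-s)) := by
  have hx' : x ∈ Metric.eball 0 1 := by
    rw [Metric.mem_eball, edist_zero_right]
    simpa [enorm_eq_nnnorm, ← NNReal.coe_lt_coe] using hx
  simpa [FormalMultilinearSeries.ofScalars_apply_eq, choose_add_sub_one_eq_asc_div_factorial,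
    mul_comm, rpow_neg (by linarith [abs_lt.mp hx] : (0 : ℝ) ≤ 1 - x)] using
    (one_div_one_sub_rpow_hasFPowerSeriesOnBall_zero s).hasSum hx'

lemma abs_tsum_mul_pow_le {f e : ℕ → ℝ} {c x : ℝ} {N : ℕ} (hc : 0 ≤ c)
    (hfe : ∀ n ≥ N, |f n| ≤ c * e n) (he : ∀ n, 0 ≤ e n) (hx₀ : 0 ≤ x) (hx₁ : x ≤ 1)
    (hsf : Summable fun n => f n * x ^ n) (hse : Summable fun n => e n * x ^ n) :
    |∑' n, f n * x ^ n| ≤ ∑ n ∈ range N, |f n| + c * ∑' n, e n * x ^ n := by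
  have habs : Summable fun n => |f n| * x ^ n := by
    simpa [abs_mul, abs_of_nonneg (pow_nonneg hx₀ _)] using hsf.abs
  have head : ∑ n ∈ range N, |f n| * x ^ n ≤ ∑ n ∈ range N, |f n| :=
    sum_le_sum fun n _ => mul_le_of_le_one_right (abs_nonneg _) (pow_le_one₀ hx₀ hx₁)
  have tail : ∑' n, |f (n + N)| * x ^ (n + N) ≤ c * ∑' n, e n * x ^ n := by
    calc ∑' n, |f (n + N)| * x ^ (n + N) ≤ ∑' n, c * (e (n + N) * x ^ (n + N)) :=
          Summable.tsum_le_tsum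
            (fun n => by
              rw [← mul_assoc]
              exact mul_le_mul_of_nonneg_right (hfe _ (Nat.le_add_left N n)) (pow_nonneg hx₀ _))
            ((summable_nat_add_iff N).mpr habs) (((summable_nat_add_iff N).mpr hse).mul_left c)
      _ = c * ∑' n, e (n + N) * x ^ (n + N) := tsum_mul_left
      _ ≤ c * ∑' n, e n * x ^ n := by
          refine mul_le_mul_of_nonneg_left ?_ hc
          rw [← hse.sum_add_tsum_nat_add N]
          exact le_add_of_nonneg_left
            (sum_nonneg fun n _ => mul_nonneg (he n) (pow_nonneg hx₀ _))
  calc |∑' n, f n * x ^ n| ≤ ∑' n, |f n| * x ^ n := by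
        simpa [abs_mul, abs_of_nonneg hx₀] using norm_tsum_le_tsum_norm hsf.norm
    _ = ∑ n ∈ range N, |f n| * x ^ n + ∑' n, |f (n + N)| * x ^ (n + N) :=
        (habs.sum_add_tsum_nat_add N).symm
    _ ≤ _ := add_le_add head tail

lemma isLittleO_tsum_mul_pow {f e : ℕ → ℝ} (he : ∀ n, 0 ≤ e n) (hfe : f =o[atTop] e)
    (hsf : ∀ x ∈ Set.Ico (0 : ℝ) 1, Summable fun n => f n * x ^ n)
    (hse : ∀ x ∈ Set.Ico (0 : ℝ) 1, Summable fun n => e n * x ^ n)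
    (hE : Tendsto (fun x => ∑' n, e n * x ^ n) (𝓝[<] 1) atTop) :
    (fun x => ∑' n, f n * x ^ n) =o[𝓝[<] 1] fun x => ∑' n, e n * x ^ n := by
  refine IsLittleO.of_bound fun c hc => ?_
  obtain ⟨N, hN⟩ := eventually_atTop.mp (hfe.bound (half_pos hc))
  have hfN : ∀ n ≥ N, |f n| ≤ c / 2 * e n := fun n hn => by
    simpa [abs_of_nonneg (he n)] using hN n hn
  set C := ∑ n ∈ range N, |f n|
  filter_upwards [Ioo_mem_nhdsLT zero_lt_one, hE.eventually_ge_atTop (2 * C / c)]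
    with x ⟨hx₀, hx₁⟩ hCE
  have hx : x ∈ Set.Ico (0 : ℝ) 1 := ⟨hx₀.le, hx₁⟩
  have hC : C ≤ c / 2 * ∑' n, e n * x ^ n := by
    rw [div_le_iff₀ hc] at hCE; linarith
  have hE0 : 0 ≤ ∑' n, e n * x ^ n :=
    tsum_nonneg fun n => mul_nonneg (he n) (pow_nonneg hx₀.le _)
  rw [Real.norm_eq_abs, Real.norm_eq_abs, abs_of_nonneg hE0]
  linarith [abs_tsum_mul_pow_le (half_pos hc).le hfN he hx₀.le hx₁.le (hsf x hx) (hse x hx)]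

theorem tendsto_tsum_mul_pow_div_tsum_mul_pow {d e : ℕ → ℝ} {L : ℝ} (he : ∀ n, 0 < e n)
    (hse : ∀ x ∈ Set.Ico (0 : ℝ) 1, Summable fun n => e n * x ^ n)
    (hE : Tendsto (fun x => ∑' n, e n * x ^ n) (𝓝[<] 1) atTop)
    (hde : Tendsto (fun n => d n / e n) atTop (𝓝 L)) :
    Tendsto (fun x => (∑' n, d n * x ^ n) / ∑' n, e n * x ^ n) (𝓝[<] 1) (𝓝 L) := by
  set f := fun n => d n - L * e n
  have hfe : f =o[atTop] e := by
    rw [isLittleO_iff_tendsto fun n hn => absurd hn (he n).ne']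
    simpa [f, sub_div, mul_div_cancel_right₀ _ (he _).ne'] using hde.sub_const L
  have hsf : ∀ x ∈ Set.Ico (0 : ℝ) 1, Summable fun n => f n * x ^ n := fun x hx =>
    summable_of_isBigO_nat (hse x hx).abs <|
      (hfe.isBigO.mul (isBigO_refl (fun n => x ^ n) _)).trans
        (isBigO_abs_right.mpr (isBigO_refl _ _))
  have hF := (isLittleO_tsum_mul_pow (fun n => (he n).le) hfe hsf hse hE).tendsto_div_nhds_zero
  rw [← add_zero L]
  refine (tendsto_const_nhds.add hF).congr' ?_
  filter_upwards [Ioo_mem_nhdsLT zero_lt_one, hE.eventually_gt_atTop 0]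
    with x ⟨hx₀, hx₁⟩ hE0
  have hx : x ∈ Set.Ico (0 : ℝ) 1 := ⟨hx₀.le, hx₁⟩
  have hd : (∑' n, d n * x ^ n) = (∑' n, f n * x ^ n) + L * ∑' n, e n * x ^ n := by
    rw [← tsum_mul_left, ← (hsf x hx).tsum_add ((hse x hx).mul_left L)]
    exact tsum_congr fun n => by simp only [f]; ring
  rw [hd, add_div, mul_div_cancel_right₀ _ hE0.ne', add_comm]

lemma tendsto_one_sub_rpow_neg_nhdsLT_one {s : ℝ} (hs : 0 < s) :
    Tendsto (fun x : ℝ => (1 - x) ^ (-s)) (𝓝[<] 1) atTop := by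
  have h : Tendsto (fun x : ℝ => 1 - x) (𝓝[<] 1) (𝓝[>] 0) :=
    tendsto_nhdsWithin_of_tendsto_nhds_of_eventually_within _
      ((continuous_const.sub continuous_id).tendsto' 1 0 (sub_self 1) |>.mono_left
        nhdsWithin_le_nhds)
      (eventually_nhdsWithin_of_forall fun _ hx => Set.mem_Ioi.mpr (sub_pos.mpr hx))
  exact (tendsto_rpow_neg_nhdsGT_zero (neg_lt_zero.mpr hs)).comp h

lemma GammaSeq_eq_div_asc (u : ℝ) (m : ℕ) :
    GammaSeq u m = (m : ℝ) ^ u * m.factorial / asc u (m + 1) := rfl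

lemma tendsto_asc_mul_asc_div_asc_mul_asc {a b c s : ℝ} (ha : 0 < a) (hb : 0 < b) (hc : 0 < c)
    (hs : 0 < s) (habcs : c + s = a + b) :
    Tendsto (fun n => asc a n * asc b n / (asc c n * asc s n)) atTop
      (𝓝 (Gamma c * Gamma s / (Gamma a * Gamma b))) := by
  have hGamma := ((GammaSeq_tendsto_Gamma c).mul (GammaSeq_tendsto_Gamma s)).div
    ((GammaSeq_tendsto_Gamma a).mul (GammaSeq_tendsto_Gamma b))
    (mul_pos (Gamma_pos_of_pos ha) (Gamma_pos_of_pos hb)).ne'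
  refine (tendsto_add_atTop_iff_nat 1).mp (hGamma.congr' ?_)
  filter_upwards [eventually_ge_atTop 1] with m hm
  have hm₀ : (0 : ℝ) < m := by exact_mod_cast hm
  have hpow : (m : ℝ) ^ c * (m : ℝ) ^ s = (m : ℝ) ^ a * (m : ℝ) ^ b := by
    rw [← rpow_add hm₀, ← rpow_add hm₀, habcs]
  have := asc_pos ha (m + 1); have := asc_pos hb (m + 1)
  have := asc_pos hc (m + 1); have := asc_pos hs (m + 1)
  simp only [Pi.div_apply, GammaSeq_eq_div_asc]
  field_simp
  linear_combination hpow

theorem hyp2F1_power_asymptotic (a b c : ℝ) (ha : 0 < a) (hb : 0 < b) (hc : 0 < c)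
    (hcab : c - a - b < 0) :
    Tendsto (fun x => hyp2F1 a b c x * (1-x) ^ (a+b-c))
      (nhdsWithin 1 (Set.Iio 1))
      (nhds (Real.Gamma c * Real.Gamma (a+b-c) / (Real.Gamma a * Real.Gamma b))) := by
  set s := a + b - c
  have hs : 0 < s := by linarith
  have hbinom : ∀ x ∈ Set.Ico (0 : ℝ) 1,
      HasSum (fun n => asc s n / n.factorial * x ^ n) ((1 - x) ^ (-s)) := fun x hx =>
    hasSum_asc_div_factorial_mul_pow s (abs_lt.mpr ⟨by linarith [hx.1], hx.2⟩)
  have hcoeff : Tendsto (fun n => asc a n * asc b n / (asc c n * n.factorial) /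
      (asc s n / n.factorial)) atTop (𝓝 (Gamma c * Gamma s / (Gamma a * Gamma b))) := by
    refine (tendsto_asc_mul_asc_div_asc_mul_asc ha hb hc hs (by ring)).congr fun n => ?_
    have := n.factorial_pos
    field_simp
  have hE : Tendsto (fun x => ∑' n, asc s n / n.factorial * x ^ n) (𝓝[<] 1) atTop :=
    (tendsto_one_sub_rpow_neg_nhdsLT_one hs).congr' <| by
      filter_upwards [Ioo_mem_nhdsLT zero_lt_one] with x hx
      exact (hbinom x (Set.Ioo_subset_Ico_self hx)).tsum_eq.symm
  refine (tendsto_tsum_mul_pow_div_tsum_mul_pow (fun n => div_pos (asc_pos hs n) (by positivity))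
    (fun x hx => (hbinom x hx).summable) hE hcoeff).congr' ?_
  filter_upwards [Ioo_mem_nhdsLT zero_lt_one] with x hx
  rw [(hbinom x (Set.Ioo_subset_Ico_self hx)).tsum_eq, rpow_neg (by linarith [hx.2]),
    div_inv_eq_mul, hyp2F1]
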